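/- arXiv:2006.12098 — 4 statements merged into one kernel-verified Lean document; each statement's English description precedes it below -/
import Mathlib

section
/- Let s, m be positive natural numbers and N = s + m. Let v¹,…,vᵐ ∈ ℝ^N be linearly independent vectors and w¹,…,wˢ ∈ ℝ^N be linearly independent vectors such that ⟨vⁱ, wʲ⟩ = 0 for all i = 1,…,m and j = 1,…,s. Let δ₁,…,δ_N ∈ ℂ be such that 0 does not belong to the convex hull of {δ₁,…,δ_N} in ℂ (identified with ℝ²), and let D = diag(δ₁,…,δ_N) ∈ ℂ^{N×N}. Then the vectors D v¹, …, D vᵐ, w¹, …, wˢ (where vⁱ and wʲ are regarded as vectors in ℂ^N) form a basis of ℂ^N; equivalently, the N×N complex matrix whose rows are (D v¹)ᵀ, …, (D vᵐ)ᵀ, (w¹)ᵀ, …, (wˢ)ᵀ is invertible. -/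
open Finset Complex

/-- Complexified real linearly independent vectors: coefficient lemma. -/
lemma aux_real_li {n k : ℕ} (v : Fin k → Fin n → ℝ) (hv : LinearIndependent ℝ v)
    (a : Fin k → ℂ) (h : ∀ l, ∑ i, a i * (v i l : ℂ) = 0) : ∀ i, a i = 0 := by
  rw [Fintype.linearIndependent_iff] at hv
  have hre : ∀ i, (a i).re = 0 := by
    apply hv
    funext l
    have := congrArg Complex.re (h l)
    simpa [Complex.re_sum] using this
  have him : ∀ i, (a i).im = 0 := by
    apply hv
    funext l
    have := congrArg Complex.im (h l)
    simpa [Complex.im_sum] using this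
  intro i
  exact Complex.ext (hre i) (him i)

/-- Lemma on invertibility of a matrix built from rows `D vⁱ` and `wʲ`,
where `0` is not in the convex hull of the diagonal entries of `D`. -/
theorem stmt0 (s m N : ℕ) (hs : 0 < s) (hm : 0 < m) (hN : N = s + m)
    (v : Fin m → (Fin N → ℝ)) (w : Fin s → (Fin N → ℝ))
    (hv : LinearIndependent ℝ v) (hw : LinearIndependent ℝ w)
    (horth : ∀ i j, ∑ l, v i l * w j l = 0)
    (δ : Fin N → ℂ) (hδ : (0 : ℂ) ∉ convexHull ℝ (Set.range δ)) :
    LinearIndependent ℂ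
      (Sum.elim (fun i => fun l => δ l * (v i l : ℂ))
        (fun j => fun l => ((w j l : ℝ) : ℂ)) : Fin m ⊕ Fin s → (Fin N → ℂ)) ∧
    Submodule.span ℂ (Set.range
      (Sum.elim (fun i => fun l => δ l * (v i l : ℂ))
        (fun j => fun l => ((w j l : ℝ) : ℂ)) : Fin m ⊕ Fin s → (Fin N → ℂ))) = ⊤ := by
  have hli : LinearIndependent ℂ
      (Sum.elim (fun i => fun l => δ l * (v i l : ℂ))
        (fun j => fun l => ((w j l : ℝ) : ℂ)) : Fin m ⊕ Fin s → (Fin N → ℂ)) := by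
    rw [Fintype.linearIndependent_iff]
    intro g hg
    set a : Fin m → ℂ := fun i => g (Sum.inl i) with ha
    set b : Fin s → ℂ := fun j => g (Sum.inr j) with hb
    set u : Fin N → ℂ := fun l => ∑ i, a i * (v i l : ℂ) with hu
    have hg' : ∀ l, δ l * u l + ∑ j, b j * (w j l : ℂ) = 0 := by
      intro l
      have h1 := congrFun hg l
      simp only [Fintype.sum_sum_type, Sum.elim_inl, Sum.elim_inr, Finset.sum_apply,
        Pi.add_apply, Pi.smul_apply, smul_eq_mul, Pi.zero_apply] at h1
      rw [hu, Finset.mul_sum]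
      rw [← h1]
      congr 1
      · exact Finset.sum_congr rfl (fun i _ => by ring)
    -- cross term vanishes
    have hcross : ∀ j, ∑ l, (starRingEnd ℂ) (u l) * (w j l : ℂ) = 0 := by
      intro j
      have : ∀ l, (starRingEnd ℂ) (u l) * (w j l : ℂ)
          = ∑ i, (starRingEnd ℂ) (a i) * ((v i l : ℂ) * (w j l : ℂ)) := by
        intro l
        simp only [hu, map_sum, map_mul, Complex.conj_ofReal, Finset.sum_mul]
        exact Finset.sum_congr rfl (fun i _ => by ring)
      rw [Finset.sum_congr rfl (fun l _ => this l), Finset.sum_comm]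
      apply Finset.sum_eq_zero
      intro i _
      rw [← Finset.mul_sum]
      have : ∑ l, ((v i l : ℂ) * (w j l : ℂ)) = ((∑ l, v i l * w j l : ℝ) : ℂ) := by
        push_cast; ring_nf
      rw [this, horth i j]
      simp
    have hsum : ∑ l, δ l * (Complex.normSq (u l) : ℂ) = 0 := by
      have h0 : ∑ l, (starRingEnd ℂ) (u l) * (δ l * u l + ∑ j, b j * (w j l : ℂ)) = 0 := by
        apply Finset.sum_eq_zero
        intro l _
        rw [hg' l, mul_zero]
      have hexp : ∀ l, (starRingEnd ℂ) (u l) * (δ l * u l + ∑ j, b j * (w j l : ℂ))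
          = δ l * (Complex.normSq (u l) : ℂ)
            + ∑ j, b j * ((starRingEnd ℂ) (u l) * (w j l : ℂ)) := by
        intro l
        rw [mul_add, Finset.mul_sum (f := fun j => b j * (w j l : ℂ))]
        congr 1
        · rw [Complex.normSq_eq_conj_mul_self (z := u l)]; ring
        · exact Finset.sum_congr rfl (fun j _ => by ring)
      rw [Finset.sum_congr rfl (fun l _ => hexp l), Finset.sum_add_distrib] at h0
      rw [Finset.sum_comm] at h0
      have : ∑ j, ∑ l, b j * ((starRingEnd ℂ) (u l) * (w j l : ℂ)) = 0 := by
        apply Finset.sum_eq_zero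
        intro j _
        rw [← Finset.mul_sum, hcross j, mul_zero]
      rw [this, add_zero] at h0
      exact h0
    -- u = 0
    have hu0 : ∀ l, u l = 0 := by
      by_contra hne
      push_neg at hne
      obtain ⟨l0, hl0⟩ := hne
      set c : Fin N → ℝ := fun l => Complex.normSq (u l) with hc
      have hc0 : ∀ l ∈ Finset.univ, 0 ≤ c l := fun l _ => Complex.normSq_nonneg _
      have hcpos : 0 < ∑ l, c l := by
        apply Finset.sum_pos'  hc0
        exact ⟨l0, Finset.mem_univ _, by simpa [hc] using Complex.normSq_pos.mpr hl0⟩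
      have hmem : Finset.univ.centerMass c δ ∈ convexHull ℝ (Set.range δ) :=
        Finset.centerMass_mem_convexHull _ hc0 hcpos (fun l _ => Set.mem_range_self l)
      have hzero : Finset.univ.centerMass c δ = 0 := by
        rw [Finset.centerMass]
        have : ∑ l, c l • δ l = 0 := by
          rw [← hsum]
          exact Finset.sum_congr rfl (fun l _ => by
            simp [hc, Complex.real_smul]; ring)
        rw [this, smul_zero]
      rw [hzero] at hmem
      exact hδ hmem
    have ha0 : ∀ i, a i = 0 := aux_real_li v hv a hu0
    have hb0 : ∀ j, b j = 0 := by
      apply aux_real_li w hw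
      intro l
      have := hg' l
      rw [hu0 l, mul_zero, zero_add] at this
      exact this
    intro k
    cases k with
    | inl i => exact ha0 i
    | inr j => exact hb0 j
  refine ⟨hli, ?_⟩
  haveI : Nonempty (Fin m ⊕ Fin s) := ⟨Sum.inl ⟨0, hm⟩⟩
  apply hli.span_eq_top_of_card_eq_finrank
  simp [hN, add_comm]
end

section
/- Let N, m be positive natural numbers, let v¹,…,vᵐ ∈ ℝ^N be linearly independent vectors, and let V = [v¹ ⋯ vᵐ] ∈ ℝ^{N×m} be the matrix whose columns are v¹,…,vᵐ. Let δ₁,…,δ_N ∈ ℂ be such that 0 does not belong to the convex hull of {δ₁,…,δ_N} in ℂ (identified with ℝ²), and let D = diag(δ₁,…,δ_N) ∈ ℂ^{N×N}. Then the complex m×m matrix Vᵀ D V is invertible; equivalently, the linear map γ ↦ Vᵀ D V γ on ℂ^m is injective. -/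
open scoped Matrix


/-- If the columns of `V` are linearly independent and `0` is not in the convex
hull of the diagonal entries of `D`, then `Vᵀ D V` is invertible. -/
theorem stmt2 (N m : ℕ) (hN : 0 < N) (hm : 0 < m)
    (v : Fin m → (Fin N → ℝ)) (hv : LinearIndependent ℝ v)
    (δ : Fin N → ℂ) (hδ : (0 : ℂ) ∉ convexHull ℝ (Set.range δ)) :
    IsUnit ((Matrix.of (fun i j => ((v j i : ℝ) : ℂ)) : Matrix (Fin N) (Fin m) ℂ).transpose
      * Matrix.diagonal δ
      * (Matrix.of (fun i j => ((v j i : ℝ) : ℂ)) : Matrix (Fin N) (Fin m) ℂ)) := by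
  set V : Matrix (Fin N) (Fin m) ℂ := Matrix.of (fun i j => ((v j i : ℝ) : ℂ)) with hVdef
  rw [Matrix.isUnit_iff_isUnit_det, isUnit_iff_ne_zero]
  intro hdet
  obtain ⟨γ, hγ, hγ0⟩ := Matrix.exists_mulVec_eq_zero_iff.2 hdet
  set x : Fin N → ℂ := V *ᵥ γ with hxdef
  have hv' := Fintype.linearIndependent_iff.1 hv
  -- x ≠ 0
  have hx0 : x ≠ 0 := by
    intro h
    apply hγ
    have hre : ∀ i, (x i).re = 0 := fun i => by rw [h]; rfl
    have him : ∀ i, (x i).im = 0 := fun i => by rw [h]; rfl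
    have hxi : ∀ i, x i = ∑ j, (v j i : ℂ) * γ j := fun i => by
      simp [hxdef, hVdef, Matrix.mulVec, dotProduct]
    have hre' : ∀ j, (γ j).re = 0 := by
      apply hv' (fun j => (γ j).re)
      funext i
      have := hre i
      rw [hxi i] at this
      simpa [Complex.re_sum, mul_comm] using this
    have him' : ∀ j, (γ j).im = 0 := by
      apply hv' (fun j => (γ j).im)
      funext i
      have := him i
      rw [hxi i] at this
      simpa [Complex.im_sum, mul_comm] using this
    funext j
    exact Complex.ext (hre' j) (him' j)
  -- key identity
  have key : ∑ i, (Complex.normSq (x i) : ℂ) * δ i = 0 := by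
    have h0 : star γ ⬝ᵥ ((V.transpose * Matrix.diagonal δ * V) *ᵥ γ) = 0 := by
      rw [hγ0]; simp
    have hstar : V *ᵥ star γ = star x := by
      funext i
      simp [hxdef, hVdef, Matrix.mulVec, dotProduct, map_sum, Pi.star_apply,
        Complex.conj_ofReal, mul_comm]
    have h1 : star γ ⬝ᵥ ((V.transpose * Matrix.diagonal δ * V) *ᵥ γ)
        = star x ⬝ᵥ (Matrix.diagonal δ *ᵥ x) := by
      rw [Matrix.mul_assoc, ← Matrix.mulVec_mulVec, Matrix.dotProduct_mulVec,
        Matrix.vecMul_transpose, hstar, Matrix.mulVec_mulVec]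
    have h2 : star x ⬝ᵥ (Matrix.diagonal δ *ᵥ x) = ∑ i, (Complex.normSq (x i) : ℂ) * δ i := by
      simp only [dotProduct, Matrix.mulVec_diagonal, Pi.star_apply, Complex.star_def]
      refine Finset.sum_congr rfl fun i _ => ?_
      rw [← Complex.mul_conj]
      ring
    rw [← h2, ← h1, h0]
  -- contradiction with hδ
  apply hδ
  have hmem := Finset.centerMass_mem_convexHull (Finset.univ)
    (w := fun i => Complex.normSq (x i)) (z := δ)
    (fun i _ => Complex.normSq_nonneg _)
    (by
      obtain ⟨i, hi⟩ := Function.ne_iff.1 hx0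
      exact Finset.sum_pos' (fun j _ => Complex.normSq_nonneg _)
        ⟨i, Finset.mem_univ i, Complex.normSq_pos.2 hi⟩)
    (fun i _ => Set.mem_range_self i)
  have hcm : Finset.univ.centerMass (fun i => Complex.normSq (x i)) δ = 0 := by
    rw [Finset.centerMass]
    have : ∑ i, Complex.normSq (x i) • δ i = 0 := by
      simpa only [Complex.real_smul] using key
    rw [this, smul_zero]
  rwa [hcm] at hmem
end

section
/- Let n, m, k be natural numbers with n ≥ 2, and for r > 0 define p_{m,k}^n(r) = ∫₀^∞ s^{n-2} (1+s)^{-(m-1-k)} e^{-(s+1)r} ds. Then for all real numbers c > 0 and y > 0, the identity ∫₀^∞ p_{m,k}^n(c(y+r)) r^{n-1} dr = ((n-1)! / cⁿ) · p_{m+n,k}^n(c y) holds, and in particular both integrals are finite. -/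
/-!
Expand `p_{m,k}^n(c(y+r))` as an integral over `s` and exchange the two integrations; the
integrand is nonnegative, and its `r`-sections are Gamma integrals,
`∫₀^∞ r^{n-1} e^{-(s+1)cr} dr = (n-1)! / ((s+1)c)^n`, so the inner integral is again integrable
in `s`. The extra factor `(1+s)^{-n}` is exactly the shift `m ↦ m + n`.
-/

open MeasureTheory Set

/-- The kernel function `p_{m,k}^n(r) = ∫₀^∞ s^{n-2} (1+s)^{-(m-1-k)} e^{-(s+1)r} ds`. -/
noncomputable def pKernel (n m k : ℕ) (r : ℝ) : ℝ :=
  ∫ s in Ioi (0 : ℝ),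
    s ^ (n - 2) * (1 + s) ^ (-((m : ℤ) - 1 - (k : ℤ))) * Real.exp (-(s + 1) * r)

open Real Filter Asymptotics
open scoped Nat

noncomputable def kernelIntegrand (p : ℕ) (β : ℤ) (a s : ℝ) : ℝ :=
  s ^ p * (1 + s) ^ β * exp (-(s + 1) * a)

lemma kernelIntegrand_nonneg (p : ℕ) (β : ℤ) (a : ℝ) {s : ℝ} (hs : 0 ≤ s) :
    0 ≤ kernelIntegrand p β a s := by
  unfold kernelIntegrand
  positivity

lemma continuousOn_kernelIntegrand (p : ℕ) (β : ℤ) (a : ℝ) :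
    ContinuousOn (kernelIntegrand p β a) (Ici 0) := by
  refine ContinuousOn.mul (ContinuousOn.mul (by fun_prop) fun s (hs : 0 ≤ s) => ?_) (by fun_prop)
  exact ((continuousAt_zpow₀ _ _ (Or.inl (by positivity))).comp
    (by fun_prop)).continuousWithinAt

lemma integrableOn_kernelIntegrand (p : ℕ) (β : ℤ) {a : ℝ} (ha : 0 < a) :
    IntegrableOn (kernelIntegrand p β a) (Ioi 0) := by
  refine integrable_of_isBigO_exp_neg (half_pos ha) (continuousOn_kernelIntegrand p β a) ?_
  have hpow : (fun s : ℝ => s ^ p) =o[atTop] fun s => exp (a / 4 * s) :=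
    isLittleO_pow_exp_pos_mul_atTop p (by positivity)
  have hzpow : (fun s : ℝ => (1 + s) ^ β) =o[atTop] fun s => exp (a / 4 * (1 + s)) :=
    (isLittleO_zpow_exp_pos_mul_atTop β (by positivity)).comp_tendsto
      (tendsto_atTop_add_const_left _ 1 tendsto_id)
  refine ((hpow.isBigO.mul hzpow.isBigO).mul (isBigO_refl (fun s => exp (-(s + 1) * a)) _)).trans
    (IsBigO.of_bound 1 (Eventually.of_forall fun s => ?_))
  simp only [← exp_add, one_mul, norm_eq_abs, abs_exp, exp_le_exp]
  nlinarith

lemma integrableOn_pow_mul_exp_neg_mul (q : ℕ) {b : ℝ} (hb : 0 < b) :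
    IntegrableOn (fun r : ℝ => r ^ q * exp (-b * r)) (Ioi 0) := by
  have hq : -1 < (q : ℝ) := by linarith [q.cast_nonneg (α := ℝ)]
  refine (integrableOn_rpow_mul_exp_neg_mul_rpow hq one_pos hb).congr_fun (fun r _ => ?_)
    measurableSet_Ioi
  simp only [rpow_natCast, rpow_one, neg_mul]

lemma integral_pow_mul_exp_neg_mul_Ioi (q : ℕ) {b : ℝ} (hb : 0 < b) :
    ∫ r in Ioi 0, r ^ q * exp (-b * r) = q ! / b ^ (q + 1) := by
  have hGamma := integral_rpow_mul_exp_neg_mul_Ioi (by positivity : 0 < (q : ℝ) + 1) hb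
  rw [add_sub_cancel_right, Gamma_nat_eq_factorial, ← Nat.cast_succ, rpow_natCast] at hGamma
  simp only [rpow_natCast, ← neg_mul] at hGamma
  rw [hGamma, div_pow, one_pow, one_div_mul_eq_div]

lemma kernelIntegrand_add_mul_mul_pow (p q : ℕ) (β : ℤ) (a b r s : ℝ) :
    kernelIntegrand p β (a + b * r) s * r ^ q
      = kernelIntegrand p β a s * (r ^ q * exp (-((s + 1) * b) * r)) := by
  unfold kernelIntegrand
  rw [show -(s + 1) * (a + b * r) = -(s + 1) * a + -((s + 1) * b) * r by ring, exp_add]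
  ring

lemma integral_kernelIntegrand_add_mul_mul_pow (p q : ℕ) (β : ℤ) (a : ℝ) {b s : ℝ}
    (hb : 0 < b) (hs : -1 < s) :
    ∫ r in Ioi 0, kernelIntegrand p β (a + b * r) s * r ^ q
      = q ! / b ^ (q + 1) * kernelIntegrand p (β - (q + 1 : ℕ)) a s := by
  have h1s : 0 < 1 + s := by linarith
  simp_rw [kernelIntegrand_add_mul_mul_pow]
  rw [integral_const_mul, integral_pow_mul_exp_neg_mul_Ioi q (by nlinarith : 0 < (s + 1) * b)]
  unfold kernelIntegrand
  rw [zpow_sub₀ h1s.ne', zpow_natCast, add_comm s 1, mul_pow]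
  field_simp

section

variable (p q : ℕ) (β : ℤ) {a b : ℝ}

lemma integrable_kernelIntegrand_add_mul_mul_pow (ha : 0 < a) (hb : 0 < b) :
    Integrable (fun x : ℝ × ℝ => kernelIntegrand p β (a + b * x.1) x.2 * x.1 ^ q)
      ((volume.restrict (Ioi 0)).prod (volume.restrict (Ioi 0))) := by
  have hmeas : Measurable fun x : ℝ × ℝ => kernelIntegrand p β (a + b * x.1) x.2 * x.1 ^ q := by
    unfold kernelIntegrand
    fun_prop
  refine (integrable_prod_iff' hmeas.aestronglyMeasurable).2 ⟨?_, ?_⟩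
  · filter_upwards [self_mem_ae_restrict measurableSet_Ioi] with s (hs : 0 < s)
    simp_rw [kernelIntegrand_add_mul_mul_pow]
    exact (integrableOn_pow_mul_exp_neg_mul q (by positivity)).const_mul _
  · refine ((integrableOn_kernelIntegrand p (β - (q + 1 : ℕ)) ha).const_mul
      (q ! / b ^ (q + 1))).congr ?_
    filter_upwards [self_mem_ae_restrict measurableSet_Ioi] with s (hs : 0 < s)
    rw [← integral_kernelIntegrand_add_mul_mul_pow p q β a hb (by linarith)]
    refine setIntegral_congr_fun measurableSet_Ioi fun r (hr : 0 < r) => ?_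
    exact (norm_of_nonneg (mul_nonneg (kernelIntegrand_nonneg _ _ _ hs.le) (by positivity))).symm

lemma integrableOn_integral_kernelIntegrand_add_mul_mul_pow (ha : 0 < a) (hb : 0 < b) :
    IntegrableOn (fun r => (∫ s in Ioi 0, kernelIntegrand p β (a + b * r) s) * r ^ q) (Ioi 0) := by
  simp_rw [← integral_mul_const]
  exact (integrable_kernelIntegrand_add_mul_mul_pow p q β ha hb).integral_prod_left

lemma integral_integral_kernelIntegrand_add_mul_mul_pow (ha : 0 < a) (hb : 0 < b) :
    ∫ r in Ioi 0, (∫ s in Ioi 0, kernelIntegrand p β (a + b * r) s) * r ^ q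
      = q ! / b ^ (q + 1) * ∫ s in Ioi 0, kernelIntegrand p (β - (q + 1 : ℕ)) a s := by
  simp_rw [← integral_mul_const]
  rw [integral_integral_swap (integrable_kernelIntegrand_add_mul_mul_pow p q β ha hb),
    ← integral_const_mul]
  exact setIntegral_congr_fun measurableSet_Ioi fun s (hs : 0 < s) =>
    integral_kernelIntegrand_add_mul_mul_pow p q β a hb (by linarith)

end

/-- The identity `∫₀^∞ p_{m,k}^n(c(y+r)) r^{n-1} dr = ((n-1)!/cⁿ) p_{m+n,k}^n(cy)`,
together with finiteness of both integrals. -/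
theorem stmt3 (n m k : ℕ) (hn : 2 ≤ n) (c y : ℝ) (hc : 0 < c) (hy : 0 < y) :
    IntegrableOn (fun r : ℝ => pKernel n m k (c * (y + r)) * r ^ (n - 1)) (Ioi 0) ∧
    IntegrableOn (fun s : ℝ =>
      s ^ (n - 2) * (1 + s) ^ (-(((m + n) : ℤ) - 1 - (k : ℤ))) *
        Real.exp (-(s + 1) * (c * y))) (Ioi 0) ∧
    (∫ r in Ioi (0 : ℝ), pKernel n m k (c * (y + r)) * r ^ (n - 1))
      = (((n - 1).factorial : ℝ) / c ^ n) * pKernel n (m + n) k (c * y) := by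
  have hcy : 0 < c * y := mul_pos hc hy
  have hpKernel : ∀ r, pKernel n m k (c * (y + r))
      = ∫ s in Ioi 0, kernelIntegrand (n - 2) (-((m : ℤ) - 1 - k)) (c * y + c * r) s :=
    fun r => by rw [mul_add]; rfl
  have hexp : -(((m + n : ℕ) : ℤ) - 1 - k) = -((m : ℤ) - 1 - k) - (n - 1 + 1 : ℕ) := by
    rw [Nat.sub_add_cancel (by omega : 1 ≤ n)]
    push_cast
    ring
  simp_rw [hpKernel]
  refine ⟨integrableOn_integral_kernelIntegrand_add_mul_mul_pow _ _ _ hcy hc,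
    integrableOn_kernelIntegrand _ _ hcy, ?_⟩
  rw [integral_integral_kernelIntegrand_add_mul_mul_pow _ _ _ hcy hc, pKernel, hexp,
    Nat.sub_add_cancel (by omega : 1 ≤ n)]
  rfl
end

section
/- Let N, m^Σ, n^Σ be positive natural numbers with N = m^Σ + n^Σ. Let d₁,…,d_N > 0 be real numbers and D = diag(d₁,…,d_N). Let ν¹,…,ν^{m^Σ} ∈ ℝ^N be linearly independent, let e¹,…,e^{n^Σ} ∈ ℝ^N be linearly independent with ⟨e^k, ν^a⟩ = 0 for all k = 1,…,n^Σ and a = 1,…,m^Σ, and let c*₁,…,c*_N > 0 be real numbers. Let λ ∈ ℂ with Re λ ≥ 0 and b ≥ 0 be a real number with (λ, b) ≠ (0, 0). Then for every g ∈ ℂ^{n^Σ} and every h ∈ ℂ^{m^Σ} there exists a unique function v : [0,∞) → ℂ^N which is twice continuously differentiable, satisfies v(y) → 0 as y → ∞, solves the ordinary differential equations λ v_i(y) + d_i (b v_i(y) − v_i''(y)) = 0 for all y ≥ 0 and all i = 1,…,N, and satisfies the boundary conditions ⟨e^k, D v'(0)⟩ = g_k for k = 1,…,n^Σ and Σ_{i=1}^N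 (ν^a_i / c*_i) v_i(0) = h_a for a = 1,…,m^Σ. (This is the Lopatinskii–Shapiro condition for the linearisation of the fast-sorption–fast-surface-chemistry limit system.) -/
/-!
Each component of a decaying solution is `Bᵢ exp (-μᵢ y)`, where `μᵢ` is the square root of
`λ / dᵢ + b` with positive real part; this number is nonzero with nonnegative real part because
`(λ, b) ≠ (0, 0)`. The problem is thus the square linear system for `B ∈ ℂᴺ` expressing the two
boundary conditions, and it suffices to show that this system is injective. If both data vanish,
`conj B / c*` is orthogonal to every `νᵃ`; by the dimension count the `eᵏ` span the orthogonal
complement of the `νᵃ`, so pairing with the vanishing Neumann data `(dᵢ μᵢ Bᵢ)ᵢ` gives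
`∑ᵢ dᵢ μᵢ |Bᵢ|² / c*ᵢ = 0`, whose real part forces `B = 0`.
-/

open Set Filter Topology Complex ComplexConjugate

theorem exists_sq_eq_of_re_nonneg {z : ℂ} (hz : z ≠ 0) (hre : 0 ≤ z.re) :
    ∃ μ : ℂ, 0 < μ.re ∧ μ ^ 2 = z := by
  refine ⟨z ^ (2⁻¹ : ℂ), ?_, by simp⟩
  rw [cpow_inv_two_re]
  have : 0 < ‖z‖ := norm_pos_iff.2 hz
  positivity

theorem exists_decayRate {lam : ℂ} (hlam : 0 ≤ lam.re) {b : ℝ} (hb : 0 ≤ b)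
    (hnz : ¬(lam = 0 ∧ b = 0)) {d : ℝ} (hd : 0 < d) :
    ∃ μ : ℂ, 0 < μ.re ∧ μ ^ 2 = lam / d + b := by
  have hre : (lam / d + b).re = lam.re / d + b := by simp [div_ofReal_re]
  refine exists_sq_eq_of_re_nonneg (fun h0 => hnz ?_) (by rw [hre]; positivity)
  have hb0 : b = 0 := by
    have := congr_arg re h0
    rw [hre, zero_re] at this
    linarith [div_nonneg hlam hd.le]
  refine ⟨?_, hb0⟩
  simpa [hb0, hd.ne'] using h0

theorem reactionDiffusion_iff {n : Type*} [Fintype n] {lam : ℂ} {b : ℝ} {d : n → ℝ}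
    (hd : ∀ i, d i ≠ 0) {μ : n → ℂ} (hμ : ∀ i, μ i ^ 2 = lam / d i + b) (u : ℝ → n → ℂ) :
    (∀ y ∈ Ici (0 : ℝ), ∀ i, lam * u y i + (d i : ℂ) * ((b : ℂ) * u y i
        - iteratedDerivWithin 2 u (Ici 0) y i) = 0) ↔
      ∀ y ∈ Ici (0 : ℝ), ∀ i, iteratedDerivWithin 2 u (Ici 0) y i = μ i ^ 2 * u y i := by
  refine forall₂_congr fun y _ => forall_congr' fun i => ?_
  have hdi : (d i : ℂ) ≠ 0 := ofReal_ne_zero.2 (hd i)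
  rw [hμ i]
  constructor <;> intro h
  · field_simp
    linear_combination -h
  · field_simp at h
    linear_combination -h

theorem hasDerivAt_cexp_mul_ofReal (c : ℂ) (y : ℝ) :
    HasDerivAt (fun t : ℝ => cexp (c * t)) (c * cexp (c * y)) y := by
  simpa [mul_comm] using (((hasDerivAt_id (y : ℂ)).const_mul c).cexp).comp_ofReal

theorem eq_mul_cexp_of_hasDerivWithinAt {f : ℝ → ℂ} {κ : ℂ}
    (hf : ∀ y ∈ Ici (0 : ℝ), HasDerivWithinAt f (κ * f y) (Ici 0) y) {y : ℝ} (hy : 0 ≤ y) :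
    f y = f 0 * cexp (κ * y) := by
  have hg : ∀ t ∈ Ici (0 : ℝ),
      HasDerivWithinAt (fun t : ℝ => cexp (-κ * t) * f t) 0 (Ici 0) t := fun t ht => by
    refine ((hasDerivAt_cexp_mul_ofReal (-κ) t).hasDerivWithinAt.mul (hf t ht)).congr_deriv ?_
    ring
  have hconst := constant_of_has_deriv_right_zero
    (fun t ht => (hg t ht.1).continuousWithinAt.mono Icc_subset_Ici_self)
    (fun t ht => (hg t ht.1).mono (Ici_subset_Ici.2 ht.1)) y ⟨hy, le_rfl⟩
  simp only [ofReal_zero, mul_zero, Complex.exp_zero, one_mul] at hconst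
  rw [← hconst, mul_comm, ← mul_assoc, ← Complex.exp_add]
  simp

theorem tendsto_mul_cexp_neg {μ : ℂ} (hμ : 0 < μ.re) (c : ℂ) :
    Tendsto (fun y : ℝ => c * cexp (-μ * y)) atTop (𝓝 0) := by
  simpa using (Complex.tendsto_exp_nhds_zero_iff.2 (by
    simpa using tendsto_id.const_mul_atTop_of_neg (neg_lt_zero.2 hμ))).const_mul c

theorem eq_zero_of_tendsto_mul_cexp {μ : ℂ} (hμ : 0 ≤ μ.re) {c : ℂ}
    (hlim : Tendsto (fun y : ℝ => c * cexp (μ * y)) atTop (𝓝 0)) : c = 0 := by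
  have hle : ∀ᶠ y : ℝ in atTop, ‖c‖ ≤ ‖c * cexp (μ * y)‖ := by
    filter_upwards [eventually_ge_atTop 0] with y hy
    rw [norm_mul, norm_exp]
    simpa using le_mul_of_one_le_right (norm_nonneg c) (Real.one_le_exp (mul_nonneg hμ hy))
  exact norm_le_zero_iff.1 (ge_of_tendsto (by simpa using hlim.norm) hle)

theorem eqOn_mul_cexp_neg_of_tendsto {μ : ℂ} (hμ : 0 < μ.re) {w w' : ℝ → ℂ}
    (hw : ∀ y ∈ Ici (0 : ℝ), HasDerivWithinAt w (w' y) (Ici 0) y)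
    (hw' : ∀ y ∈ Ici (0 : ℝ), HasDerivWithinAt w' (μ ^ 2 * w y) (Ici 0) y)
    (hlim : Tendsto w atTop (𝓝 0)) :
    w' 0 = -μ * w 0 ∧ ∀ y ∈ Ici (0 : ℝ), w y = w 0 * cexp (-μ * y) := by
  have hμ0 : 2 * μ ≠ 0 := mul_ne_zero two_ne_zero (by rintro rfl; simp at hμ)
  -- `w' + μ w` grows like `exp (μ y)`, `w' - μ w` decays like `exp (-μ y)`, and their difference
  -- `2 μ w` tends to zero, so the growing mode is absent.
  have hgrow : ∀ y ∈ Ici (0 : ℝ), w' y + μ * w y = (w' 0 + μ * w 0) * cexp (μ * y) :=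
    fun y hy => eq_mul_cexp_of_hasDerivWithinAt
      (fun t ht => ((hw' t ht).add ((hw t ht).const_mul μ)).congr_deriv
        (by rw [Pi.add_apply]; ring)) hy
  have hdecay : ∀ y ∈ Ici (0 : ℝ), w' y - μ * w y = (w' 0 - μ * w 0) * cexp (-μ * y) :=
    fun y hy => eq_mul_cexp_of_hasDerivWithinAt
      (fun t ht => ((hw' t ht).sub ((hw t ht).const_mul μ)).congr_deriv
        (by rw [Pi.sub_apply]; ring)) hy
  have hrep : ∀ y ∈ Ici (0 : ℝ), 2 * μ * w y =
      (w' 0 + μ * w 0) * cexp (μ * y) - (w' 0 - μ * w 0) * cexp (-μ * y) := fun y hy => by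
    linear_combination hgrow y hy - hdecay y hy
  have hgrow0 : w' 0 + μ * w 0 = 0 := by
    refine eq_zero_of_tendsto_mul_cexp hμ.le ?_
    have hlim' := (hlim.const_mul (2 * μ)).add (tendsto_mul_cexp_neg hμ (w' 0 - μ * w 0))
    rw [mul_zero, zero_add] at hlim'
    refine hlim'.congr' ?_
    filter_upwards [eventually_ge_atTop 0] with y hy
    rw [hrep y hy]
    ring
  refine ⟨by linear_combination hgrow0, fun y hy => mul_left_cancel₀ hμ0 ?_⟩
  linear_combination hrep y hy + (cexp (μ * y) - cexp (-μ * y)) * hgrow0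

section ExpDecay

variable {n : Type*}

noncomputable def expDecay (μ B : n → ℂ) (y : ℝ) : n → ℂ := fun i => B i * cexp (-μ i * y)

variable {μ : n → ℂ}

theorem expDecay_zero (B : n → ℂ) : expDecay μ B 0 = B := by
  ext i
  simp [expDecay]

theorem expDecay_mul (c B : n → ℂ) (y : ℝ) : expDecay μ (c * B) y = c * expDecay μ B y := by
  ext i
  simp only [expDecay, Pi.mul_apply, mul_assoc]

theorem hasDerivAt_expDecay (B : n → ℂ) (y : ℝ) :
    HasDerivAt (expDecay μ B) (expDecay μ (-μ * B) y) y :=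
  hasDerivAt_pi.2 fun i => ((hasDerivAt_cexp_mul_ofReal (-μ i) y).const_mul (B i)).congr_deriv
    (by simp only [expDecay, Pi.mul_apply, Pi.neg_apply]; ring)

theorem contDiff_expDecay [Fintype n] (B : n → ℂ) {k : WithTop ℕ∞} :
    ContDiff ℝ k (expDecay μ B) :=
  contDiff_pi.2 fun _ => contDiff_const.mul (contDiff_const.mul ofRealCLM.contDiff).cexp

theorem derivWithin_expDecay [Fintype n] (B : n → ℂ) {y : ℝ} (hy : y ∈ Ici 0) :
    derivWithin (expDecay μ B) (Ici 0) y = expDecay μ (-μ * B) y :=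
  (hasDerivAt_expDecay B y).hasDerivWithinAt.derivWithin (uniqueDiffOn_Ici 0 y hy)

theorem iteratedDerivWithin_two_expDecay [Fintype n] (B : n → ℂ) {y : ℝ} (hy : y ∈ Ici 0) :
    iteratedDerivWithin 2 (expDecay μ B) (Ici 0) y = expDecay μ (μ ^ 2 * B) y := by
  rw [iteratedDerivWithin_eq_iterate, Function.iterate_succ_apply', Function.iterate_one,
    derivWithin_congr (fun z hz => derivWithin_expDecay B hz) (derivWithin_expDecay B hy),
    derivWithin_expDecay _ hy]
  congr 1
  ring

theorem tendsto_expDecay (hμ : ∀ i, 0 < (μ i).re) (B : n → ℂ) :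
    Tendsto (expDecay μ B) atTop (𝓝 0) :=
  tendsto_pi_nhds.2 fun i => tendsto_mul_cexp_neg (hμ i) (B i)

theorem eqOn_expDecay_of_tendsto [Fintype n] (hμ : ∀ i, 0 < (μ i).re) {u : ℝ → n → ℂ}
    (hu : ContDiffOn ℝ 2 u (Ici 0)) (hlim : Tendsto u atTop (𝓝 0))
    (hode : ∀ y ∈ Ici (0 : ℝ), ∀ i, iteratedDerivWithin 2 u (Ici 0) y i = μ i ^ 2 * u y i) :
    derivWithin u (Ici 0) 0 = -μ * u 0 ∧ EqOn u (expDecay μ (u 0)) (Ici 0) := by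
  have hdiff : DifferentiableOn ℝ u (Ici 0) := hu.differentiableOn (by norm_num)
  have hdiff' : DifferentiableOn ℝ (derivWithin u (Ici 0)) (Ici 0) :=
    (hu.derivWithin (m := 1) (uniqueDiffOn_Ici 0) (by norm_num)).differentiableOn (by norm_num)
  have hcomp : ∀ i, _ ∧ ∀ y ∈ Ici (0 : ℝ), u y i = _ := fun i =>
    eqOn_mul_cexp_neg_of_tendsto (hμ i) (w := fun y => u y i)
      (w' := fun y => derivWithin u (Ici 0) y i)
      (fun y hy => hasDerivWithinAt_pi.1 (hdiff y hy).hasDerivWithinAt i)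
      (fun y hy => by
        have := hasDerivWithinAt_pi.1 (hdiff' y hy).hasDerivWithinAt i
        rwa [← hode y hy i, iteratedDerivWithin_eq_iterate])
      (tendsto_pi_nhds.1 hlim i)
  exact ⟨funext fun i => (hcomp i).1, fun y hy => funext fun i => (hcomp i).2 y hy⟩

end ExpDecay

section Orthogonality

variable {K ι κ n : Type*} [Field K] [Fintype ι] [Fintype κ] [Fintype n]
  {ν : ι → n → K} {e : κ → n → K}

theorem span_range_eq_ker_mulVecLin_of_dotProduct_eq_zero (hν : LinearIndependent K ν)
    (he : LinearIndependent K e) (hcard : Fintype.card n = Fintype.card ι + Fintype.card κ)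
    (horth : ∀ k a, e k ⬝ᵥ ν a = 0) :
    Submodule.span K (range e) = LinearMap.ker (Matrix.of ν).mulVecLin := by
  refine Submodule.eq_of_le_of_finrank_le ?_ ?_
  · rw [Submodule.span_le]
    rintro _ ⟨k, rfl⟩
    ext a
    exact (dotProduct_comm _ _).trans (horth k a)
  · have hrank : Module.finrank K (LinearMap.range (Matrix.of ν).mulVecLin) = Fintype.card ι :=
      (Matrix.rank_eq_finrank_span_row _).trans (finrank_span_eq_card hν)
    have := LinearMap.finrank_range_add_finrank_ker (Matrix.of ν).mulVecLin
    rw [finrank_span_eq_card he]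
    simp only [Module.finrank_fintype_fun_eq_card, hcard, hrank] at this
    omega

theorem dotProduct_eq_zero_of_orthogonal (hν : LinearIndependent K ν)
    (he : LinearIndependent K e) (hcard : Fintype.card n = Fintype.card ι + Fintype.card κ)
    (horth : ∀ k a, e k ⬝ᵥ ν a = 0) {w x : n → K} (hw : ∀ k, e k ⬝ᵥ w = 0)
    (hx : ∀ a, ν a ⬝ᵥ x = 0) : w ⬝ᵥ x = 0 := by
  have hxe : x ∈ Submodule.span K (range e) := by
    rw [span_range_eq_ker_mulVecLin_of_dotProduct_eq_zero hν he hcard horth]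
    ext a
    exact hx a
  obtain ⟨c, rfl⟩ := (Submodule.mem_span_range_iff_exists_fun K).1 hxe
  rw [dotProduct_comm, sum_dotProduct]
  simp [smul_dotProduct, hw]

end Orthogonality

theorem LinearIndependent.map_ofReal {ι n : Type*} [Finite n] {v : ι → n → ℝ}
    (hv : LinearIndependent ℝ v) : LinearIndependent ℂ fun a i => (v a i : ℂ) := by
  simpa [Function.comp_def] using (linearIndependent_algebraMap_comp_iff (S := ℂ)).2 hv

section BoundaryMap

variable {ι κ n : Type*} [Fintype n]

-- The boundary data of `expDecay μ B`, whose derivative at `0` is `-μ * B`.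
noncomputable def boundaryMap (e : κ → n → ℝ) (ν : ι → n → ℝ) (cstar d : n → ℝ) (μ : n → ℂ) :
    (n → ℂ) →ₗ[ℂ] (κ → ℂ) × (ι → ℂ) where
  toFun B := (fun k => ∑ i, (e k i : ℂ) * ((d i : ℂ) * (-μ i * B i)),
    fun a => ∑ i, ((ν a i / cstar i : ℝ) : ℂ) * B i)
  map_add' B C := by
    ext <;> simp [mul_add, Finset.sum_add_distrib]
  map_smul' t B := by
    ext <;> simp [Finset.mul_sum] <;> exact Finset.sum_congr rfl fun i _ => by ring

variable {e : κ → n → ℝ} {ν : ι → n → ℝ} {cstar d : n → ℝ} {μ : n → ℂ}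

theorem boundaryMap_injective [Fintype ι] [Fintype κ] (hd : ∀ i, 0 < d i)
    (hν : LinearIndependent ℝ ν) (he : LinearIndependent ℝ e)
    (hcard : Fintype.card n = Fintype.card ι + Fintype.card κ)
    (horth : ∀ k a, ∑ i, e k i * ν a i = 0) (hcstar : ∀ i, 0 < cstar i)
    (hμ : ∀ i, 0 < (μ i).re) : Function.Injective (boundaryMap e ν cstar d μ) := by
  rw [injective_iff_map_eq_zero]
  intro B hB
  have hneumann : ∀ k, ∑ i, (e k i : ℂ) * ((d i : ℂ) * (-μ i * B i)) = 0 :=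
    fun k => congr_fun (congr_arg Prod.fst hB) k
  have hdirichlet : ∀ a, ∑ i, ((ν a i / cstar i : ℝ) : ℂ) * B i = 0 :=
    fun a => congr_fun (congr_arg Prod.snd hB) a
  have horthC : ∀ k a, (fun i => (e k i : ℂ)) ⬝ᵥ (fun i => (ν a i : ℂ)) = 0 := fun k a => by
    simp [dotProduct, ← ofReal_mul, ← ofReal_sum, horth]
  have henergy := dotProduct_eq_zero_of_orthogonal hν.map_ofReal he.map_ofReal hcard horthC
    (w := fun i => d i * μ i * B i) (x := fun i => conj (B i) / cstar i)
    (fun k => by simpa [dotProduct, mul_assoc] using hneumann k)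
    (fun a => by simpa [dotProduct, map_sum, div_eq_mul_inv, mul_assoc, mul_comm (conj _)]
      using congr_arg conj (hdirichlet a))
  have hterm : ∀ i, d i * μ i * B i * (conj (B i) / cstar i)
      = ((d i * normSq (B i) / cstar i : ℝ) : ℂ) * μ i := fun i => by
    push_cast
    rw [← mul_conj]
    ring
  have hre : ∑ i, d i * normSq (B i) / cstar i * (μ i).re = 0 := by
    simpa [dotProduct, hterm, re_sum] using congr_arg re henergy
  have hnonneg : ∀ i ∈ Finset.univ, 0 ≤ d i * normSq (B i) / cstar i * (μ i).re :=
    fun i _ => mul_nonneg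
      (div_nonneg (mul_nonneg (hd i).le (normSq_nonneg _)) (hcstar i).le) (hμ i).le
  funext i
  have := (Finset.sum_eq_zero_iff_of_nonneg hnonneg).1 hre i (Finset.mem_univ i)
  simpa [(hd i).ne', (hcstar i).ne', (hμ i).ne'] using this

theorem boundaryMap_bijective [Fintype ι] [Fintype κ] (hd : ∀ i, 0 < d i)
    (hν : LinearIndependent ℝ ν) (he : LinearIndependent ℝ e)
    (hcard : Fintype.card n = Fintype.card ι + Fintype.card κ)
    (horth : ∀ k a, ∑ i, e k i * ν a i = 0) (hcstar : ∀ i, 0 < cstar i)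
    (hμ : ∀ i, 0 < (μ i).re) : Function.Bijective (boundaryMap e ν cstar d μ) := by
  have hinj := boundaryMap_injective hd hν he hcard horth hcstar hμ
  refine ⟨hinj, (LinearMap.injective_iff_surjective_of_finrank_eq_finrank ?_).1 hinj⟩
  simp [Module.finrank_prod, hcard, add_comm]

theorem boundaryMap_eq_iff {u : ℝ → n → ℂ} (hu : derivWithin u (Ici 0) 0 = -μ * u 0)
    {g : κ → ℂ} {h : ι → ℂ} :
    boundaryMap e ν cstar d μ (u 0) = (g, h) ↔
      (∀ k, ∑ i, (e k i : ℂ) * ((d i : ℂ) * derivWithin u (Ici 0) 0 i) = g k) ∧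
        ∀ a, ∑ i, ((ν a i / cstar i : ℝ) : ℂ) * u 0 i = h a := by
  rw [hu, Prod.ext_iff, funext_iff, funext_iff]
  rfl

end BoundaryMap

theorem stmt6_general (N mS nS : ℕ) (hN : N = mS + nS)
    (d : Fin N → ℝ) (hd : ∀ i, 0 < d i)
    (ν : Fin mS → (Fin N → ℝ)) (hν : LinearIndependent ℝ ν)
    (e : Fin nS → (Fin N → ℝ)) (he : LinearIndependent ℝ e)
    (horth : ∀ k a, ∑ i, e k i * ν a i = 0)
    (cstar : Fin N → ℝ) (hcstar : ∀ i, 0 < cstar i)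
    (lam : ℂ) (hlam : 0 ≤ lam.re) (b : ℝ) (hb : 0 ≤ b)
    (hnz : ¬ (lam = 0 ∧ b = 0))
    (g : Fin nS → ℂ) (h : Fin mS → ℂ) :
    ∃ v : ℝ → (Fin N → ℂ),
      (ContDiffOn ℝ 2 v (Ici 0) ∧
        Tendsto v atTop (nhds 0) ∧
        (∀ y ∈ Ici (0 : ℝ), ∀ i,
          lam * v y i + (d i : ℂ) * ((b : ℂ) * v y i
            - iteratedDerivWithin 2 v (Ici 0) y i) = 0) ∧
        (∀ k, ∑ i, (e k i : ℂ) * ((d i : ℂ) * derivWithin v (Ici 0) 0 i) = g k) ∧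
        (∀ a, ∑ i, ((ν a i / cstar i : ℝ) : ℂ) * v 0 i = h a)) ∧
      ∀ u : ℝ → (Fin N → ℂ),
        (ContDiffOn ℝ 2 u (Ici 0) ∧
          Tendsto u atTop (nhds 0) ∧
          (∀ y ∈ Ici (0 : ℝ), ∀ i,
            lam * u y i + (d i : ℂ) * ((b : ℂ) * u y i
              - iteratedDerivWithin 2 u (Ici 0) y i) = 0) ∧
          (∀ k, ∑ i, (e k i : ℂ) * ((d i : ℂ) * derivWithin u (Ici 0) 0 i) = g k) ∧
          (∀ a, ∑ i, ((ν a i / cstar i : ℝ) : ℂ) * u 0 i = h a)) →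
        EqOn v u (Ici 0) := by
  choose μ hμre hμsq using fun i => exists_decayRate hlam hb hnz (hd i)
  have hode := reactionDiffusion_iff (fun i => (hd i).ne') hμsq
  have hcard : Fintype.card (Fin N) = Fintype.card (Fin mS) + Fintype.card (Fin nS) := by
    simp [hN]
  have hL := boundaryMap_bijective hd hν he hcard horth hcstar hμre
  obtain ⟨B, hB⟩ := hL.2 (g, h)
  have hv' : derivWithin (expDecay μ B) (Ici 0) 0 = -μ * expDecay μ B 0 := by
    rw [derivWithin_expDecay B self_mem_Ici, expDecay_mul]
  refine ⟨expDecay μ B, ⟨(contDiff_expDecay B).contDiffOn, tendsto_expDecay hμre B,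
    (hode _).2 fun y hy i => ?_, (boundaryMap_eq_iff hv').1 (by rwa [expDecay_zero])⟩, ?_⟩
  · rw [iteratedDerivWithin_two_expDecay B hy, expDecay_mul]
    rfl
  rintro u ⟨hu, hlim, hu_ode, hu_bc⟩
  obtain ⟨hu', hu_eq⟩ := eqOn_expDecay_of_tendsto hμre hu hlim ((hode u).1 hu_ode)
  have hu0 : u 0 = B := hL.1 (((boundaryMap_eq_iff hu').2 hu_bc).trans hB.symm)
  rw [hu0] at hu_eq
  exact hu_eq.symm

/-- Lopatinskii–Shapiro condition for the linearisation of the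
fast-sorption–fast-surface-chemistry limit system: unique solvability of the
boundary-value ODE system on `[0,∞)`. -/
theorem stmt6 (N mS nS : ℕ) (hmS : 0 < mS) (hnS : 0 < nS) (hN : N = mS + nS)
    (d : Fin N → ℝ) (hd : ∀ i, 0 < d i)
    (ν : Fin mS → (Fin N → ℝ)) (hν : LinearIndependent ℝ ν)
    (e : Fin nS → (Fin N → ℝ)) (he : LinearIndependent ℝ e)
    (horth : ∀ k a, ∑ i, e k i * ν a i = 0)
    (cstar : Fin N → ℝ) (hcstar : ∀ i, 0 < cstar i)
    (lam : ℂ) (hlam : 0 ≤ lam.re) (b : ℝ) (hb : 0 ≤ b)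
    (hnz : ¬ (lam = 0 ∧ b = 0))
    (g : Fin nS → ℂ) (h : Fin mS → ℂ) :
    ∃ v : ℝ → (Fin N → ℂ),
      (ContDiffOn ℝ 2 v (Ici 0) ∧
        Tendsto v atTop (nhds 0) ∧
        (∀ y ∈ Ici (0 : ℝ), ∀ i,
          lam * v y i + (d i : ℂ) * ((b : ℂ) * v y i
            - iteratedDerivWithin 2 v (Ici 0) y i) = 0) ∧
        (∀ k, ∑ i, (e k i : ℂ) * ((d i : ℂ) * derivWithin v (Ici 0) 0 i) = g k) ∧
        (∀ a, ∑ i, ((ν a i / cstar i : ℝ) : ℂ) * v 0 i = h a)) ∧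
      ∀ u : ℝ → (Fin N → ℂ),
        (ContDiffOn ℝ 2 u (Ici 0) ∧
          Tendsto u atTop (nhds 0) ∧
          (∀ y ∈ Ici (0 : ℝ), ∀ i,
            lam * u y i + (d i : ℂ) * ((b : ℂ) * u y i
              - iteratedDerivWithin 2 u (Ici 0) y i) = 0) ∧
          (∀ k, ∑ i, (e k i : ℂ) * ((d i : ℂ) * derivWithin u (Ici 0) 0 i) = g k) ∧
          (∀ a, ∑ i, ((ν a i / cstar i : ℝ) : ℂ) * u 0 i = h a)) →
        EqOn v u (Ici 0) :=
  stmt6_general N mS nS hN d hd ν hν e he horth cstar hcstar lam hlam b hb hnz g h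
end
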